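/- arXiv:1912.01354 — 3 statements merged into one kernel-verified Lean document; each statement's English description precedes it below -/
import Mathlib

section
/- For all natural numbers a ≥ 1, b, c, the following identity holds in ℤ: ∑_{j=0}^{c} (−1)^j · C(b, j) · C(a+c−j−1, a−1) equals C(a+c−b−1, c) if a ≥ b, and equals (−1)^c · C(b−a, c) if a < b. (Here C(·,·) is the usual binomial coefficient on natural numbers; in the case a ≥ b the top entry a+c−b−1 is computed with truncated natural subtraction, which gives the correct value 1 when a = b and c = 0 and 0 when a = b and c ≥ 1.) -/
/-!
The sum is the coefficient of `X ^ c` in `(1 - X) ^ b * (1 - X) ^ (-a)`, since `C(a+c-j-1, a-1)`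
is the coefficient of `X ^ (c - j)` in `(1 - X) ^ (-a)`. The product is `(1 - X) ^ (-(a - b))`
when `b ≤ a` and the polynomial `(1 - X) ^ (b - a)` when `a < b`; read off its coefficient.
-/

namespace PowerSeries

variable {S : Type*} [CommRing S]

theorem coeff_one_sub_X_pow (b n : ℕ) :
    coeff n ((1 - X : S⟦X⟧) ^ b) = (-1) ^ n * b.choose n := by
  have h : (1 - X : S⟦X⟧) ^ b = rescale (-1) ((1 + X) ^ b) := by
    rw [map_pow, map_add, map_one, rescale_neg_one_X, sub_eq_add_neg]
  rw [h, coeff_rescale, ← Polynomial.coe_X, ← Polynomial.coe_one, ← Polynomial.coe_add,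
    ← Polynomial.coe_pow, Polynomial.coeff_coe, Polynomial.coeff_one_add_X_pow]

-- For `d = 0` the truncated subtraction makes `C(n - 1, n)` equal to `1` at `n = 0` and `0` after.
theorem coeff_invOneSubPow (d n : ℕ) :
    coeff n (invOneSubPow S d : S⟦X⟧) = (d + n - 1).choose n := by
  cases d with
  | zero => cases n <;> simp [invOneSubPow_zero, coeff_one]
  | succ d =>
    rw [invOneSubPow_val_succ_eq_mk_add_choose, coeff_mk, Nat.add_right_comm,
      Nat.add_sub_cancel, Nat.choose_symm_add]

end PowerSeries

open PowerSeries

theorem sum_neg_one_pow_mul_choose_mul_choose_eq_coeff (a b c : ℕ) (ha : 1 ≤ a) :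
    (∑ j ∈ Finset.range (c + 1),
        (-1 : ℤ) ^ j * (b.choose j : ℤ) * ((a + c - j - 1).choose (a - 1) : ℤ)) =
      coeff c ((1 - X : ℤ⟦X⟧) ^ b * (invOneSubPow ℤ a : ℤ⟦X⟧)) := by
  rw [coeff_mul, Finset.Nat.sum_antidiagonal_eq_sum_range_succ_mk]
  refine Finset.sum_congr rfl fun j hj => ?_
  have hj : j ≤ c := Nat.lt_succ_iff.mp (Finset.mem_range.mp hj)
  rw [coeff_one_sub_X_pow, coeff_invOneSubPow, show a + (c - j) - 1 = a + c - j - 1 by omega,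
    Nat.choose_symm_of_eq_add (show a + c - j - 1 = a - 1 + (c - j) by omega)]

/-- A variation of the Chu–Vandermonde identity (Problem 4 of the paper):
`∑_{j=0}^{c} (−1)^j C(b,j) C(a+c−j−1, a−1)` equals `C(a+c−b−1, c)` if `a ≥ b`,
and `(−1)^c C(b−a, c)` if `a < b`. -/
theorem chu_vandermonde_variation (a b c : ℕ) (ha : 1 ≤ a) :
    (∑ j ∈ Finset.range (c + 1),
        (-1 : ℤ) ^ j * (b.choose j : ℤ) * ((a + c - j - 1).choose (a - 1) : ℤ)) =
      if b ≤ a then ((a + c - b - 1).choose c : ℤ)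
      else (-1 : ℤ) ^ c * ((b - a).choose c : ℤ) := by
  rw [sum_neg_one_pow_mul_choose_mul_choose_eq_coeff a b c ha]
  split_ifs with hba
  · obtain ⟨d, rfl⟩ := Nat.exists_eq_add_of_le hba
    rw [add_comm b d, one_sub_pow_mul_invOneSubPow_val_add_eq_invOneSubPow_val,
      coeff_invOneSubPow, Nat.add_right_comm, Nat.add_sub_cancel]
  · obtain ⟨d, rfl⟩ := Nat.exists_eq_add_of_le (Nat.le_of_not_le hba)
    rw [add_comm a d, one_sub_pow_add_mul_invOneSubPow_val_eq_one_sub_pow,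
      coeff_one_sub_X_pow, Nat.add_sub_cancel]
end

section
/- For every n ≥ 1 and 1 ≤ i ≤ n, the following identity holds in ℤ: ∑_{j=1}^{n} (−1)^{j+1} · C(2n−i−1, n−i−j+1) · C(n+j−2, n−1) · C(2n−j−1, n−1) = C(n+i−2, n−1) · C(2n−i−1, n−1). (Equivalently, ∑_{j=1}^{n} (−1)^{j+1} C(2n−i−1, n−i−j+1) |B_{n,j}| = |B_{n,i}|.) -/
/-!
Write `n = c + d + 1` and `i = c + 1`; only the terms `j = k + 1` with `k ≤ d` survive.
Trinomial revision `C(c+2d, d-k) C(c+d+k, c+d) = C(c+2d, c+d) C(d, k)` pulls out the factor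
`C(c+2d, c+d) = C(2n-i-1, n-1)`, and what remains, `∑ₖ (-1)^k C(d, k) C(2c+2d-k, c+d)`, is the
`d`-th finite difference of `x ↦ C(x, c+d)`, namely `C(2c+d, c) = C(n+i-2, n-1)`.
-/

open Finset

theorem sum_range_neg_one_pow_mul_choose_mul_choose_add (d m r : ℕ) :
    ∑ k ∈ range (d + 1), (-1 : ℤ) ^ (d - k) * d.choose k * (m + k).choose (r + d) =
      m.choose r := by
  rw [add_comm r d]
  have h := fwdDiff_iter_eq_sum_shift (h := 1) (fun x ↦ x.choose (d + r) : ℕ → ℤ) d m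
  rw [fwdDiff_iter_choose] at h
  simpa [smul_eq_mul] using h.symm

theorem sum_range_neg_one_pow_mul_choose_mul_choose_sub (d m r : ℕ) :
    ∑ k ∈ range (d + 1), (-1 : ℤ) ^ k * d.choose k * (m + (d - k)).choose (r + d) =
      m.choose r := by
  rw [← sum_range_neg_one_pow_mul_choose_mul_choose_add, ← sum_range_reflect]
  refine sum_congr rfl fun k hk => ?_
  have hkd : k ≤ d := Nat.lt_succ_iff.mp (mem_range.mp hk)
  rw [Nat.add_sub_cancel, Nat.sub_sub_self hkd, Nat.choose_symm hkd]

theorem Nat.add_choose_sub_mul_add_choose {N d k : ℕ} (hkd : k ≤ d) :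
    (N + d).choose (d - k) * (N + k).choose N = (N + d).choose N * d.choose k := by
  have h := Nat.choose_mul (n := N + d) (Nat.sub_le d k)
  rw [Nat.choose_symm hkd, Nat.sub_sub_self hkd, show N + d - (d - k) = N + k by omega] at h
  rw [@Nat.choose_symm_add N k, @Nat.choose_symm_add N d, h]

theorem b_linear_relation_general (n i : ℕ) (hi1 : 1 ≤ i) (hin : i ≤ n) :
    (∑ j ∈ Finset.Icc 1 n,
        (-1 : ℤ) ^ (j + 1) *
        (if j ≤ n - i + 1 then ((2 * n - i - 1).choose (n - i + 1 - j) : ℤ) else 0) *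
        ((n + j - 2).choose (n - 1) : ℤ) * ((2 * n - j - 1).choose (n - 1) : ℤ)) =
      ((n + i - 2).choose (n - 1) : ℤ) * ((2 * n - i - 1).choose (n - 1) : ℤ) := by
  obtain ⟨d, rfl⟩ := Nat.exists_eq_add_of_le hin
  obtain ⟨c, rfl⟩ := Nat.exists_eq_add_of_le hi1
  rw [← Ico_add_one_right_eq_Icc, sum_Ico_eq_sum_range,
    show 1 + c + d + 1 - 1 = (d + 1) + c by omega, sum_range_add,
    sum_eq_zero (s := range c) fun k _ => ?tail, add_zero,
    sum_congr rfl (g := fun k => ((c + d + d).choose (c + d) : ℤ) *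
      ((-1) ^ k * d.choose k * ((2 * c + d + (d - k)).choose (c + d) : ℤ))) fun k hk => ?term,
    ← mul_sum, sum_range_neg_one_pow_mul_choose_mul_choose_sub,
    Nat.choose_symm_of_eq_add (show 2 * c + d = c + (c + d) by omega),
    show 1 + c + d + (1 + c) - 2 = 2 * c + d by omega,
    show 2 * (1 + c + d) - (1 + c) - 1 = c + d + d by omega,
    show 1 + c + d - 1 = c + d by omega, mul_comm]
  case term =>
    have hkd : k ≤ d := Nat.lt_succ_iff.mp (mem_range.mp hk)
    have revision : ((c + d + d).choose (d - k) : ℤ) * (c + d + k).choose (c + d) =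
        (c + d + d).choose (c + d) * d.choose k := by
      exact_mod_cast Nat.add_choose_sub_mul_add_choose hkd
    rw [if_pos (by omega), show 2 * (1 + c + d) - (1 + c) - 1 = c + d + d by omega,
      show 1 + c + d - (1 + c) + 1 - (1 + k) = d - k by omega,
      show 1 + c + d + (1 + k) - 2 = c + d + k by omega, show 1 + c + d - 1 = c + d by omega,
      show 2 * (1 + c + d) - (1 + k) - 1 = 2 * c + d + (d - k) by omega]
    linear_combination (-1 : ℤ) ^ k * ((2 * c + d + (d - k)).choose (c + d) : ℤ) * revision
  case tail => rw [if_neg (by omega)]; ring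

/-- The linear relation satisfied by the numbers `|B_{n,j}| = C(n+j−2,n−1)·C(2n−j−1,n−1)`:
`∑_{j=1}^{n} (−1)^{j+1} C(2n−i−1, n−i−j+1) |B_{n,j}| = |B_{n,i}|`
(the binomial coefficient is 0 when its lower index `n−i−j+1` is negative,
i.e. when `j > n−i+1`). -/
theorem b_linear_relation (n i : ℕ) (hn : 1 ≤ n) (hi1 : 1 ≤ i) (hin : i ≤ n) :
    (∑ j ∈ Finset.Icc 1 n,
        (-1 : ℤ) ^ (j + 1) *
        (if j ≤ n - i + 1 then ((2 * n - i - 1).choose (n - i + 1 - j) : ℤ) else 0) *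
        ((n + j - 2).choose (n - 1) : ℤ) * ((2 * n - j - 1).choose (n - 1) : ℤ)) =
      ((n + i - 2).choose (n - 1) : ℤ) * ((2 * n - i - 1).choose (n - 1) : ℤ) :=
  b_linear_relation_general n i hi1 hin
end

section
/- For every n ≥ 1, every k ∈ ℤⁿ and every j ≥ 0: ∑_{V ⊆ {2,…,n}, |V| = j} ∑_{U ⊆ V} (−1)^{|U|} · G(k₁, k₂+ε₂(U), …, kₙ+εₙ(U)) = ∑_{i=0}^{j} (−1)^{j−i} · C(j, i) · G(k₁+i, k₂, …, kₙ), and likewise ∑_{V ⊆ {2,…,n}, |V| = j} ∑_{U ⊆ V} (−1)^{|U|} · G(k₁, k₂−ε₂(U), …, kₙ−εₙ(U)) = ∑_{i=0}^{j} (−1)^{j−i} · C(j, i) · G(k₁−i, k₂, …, kₙ), where ε_m(U) = 1 if m ∈ U and 0 otherwise. -/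
/-- The weight `w(a,b,x)`: 1 if `a ≤ x ≤ b`, −1 if `b < x < a`, 0 otherwise. -/
def gtw (a b x : ℤ) : ℤ :=
  if a ≤ x ∧ x ≤ b then 1 else if b < x ∧ x < a then -1 else 0

/-- The signed Gelfand–Tsetlin count: `G 1 k = 1` and
`G n (k₁,…,kₙ) = ∑_{l ∈ ℤ^{n−1}} (∏ᵢ w(kᵢ, kᵢ₊₁, lᵢ)) G (n−1) l`.
The sum is restricted to the box where the weights can be nonzero, since `gtw`
vanishes outside of it. -/
noncomputable def G : (n : ℕ) → (Fin n → ℤ) → ℤ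
  | 0, _ => 1
  | n + 1, k =>
    ∑ l ∈ Fintype.piFinset (fun i : Fin n =>
        Finset.Icc (min (k i.castSucc) (k i.succ)) (max (k i.castSucc) (k i.succ))),
      (∏ i : Fin n, gtw (k i.castSucc) (k i.succ) (l i)) * G n l


open Finset

def wProd {n : ℕ} (k : Fin (n+1) → ℤ) (l : Fin n → ℤ) : ℤ :=
  ∏ i : Fin n, gtw (k i.castSucc) (k i.succ) (l i)

noncomputable def gbox {n : ℕ} (k : Fin (n+1) → ℤ) : Finset (Fin n → ℤ) :=
  Fintype.piFinset (fun i : Fin n =>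
    Finset.Icc (min (k i.castSucc) (k i.succ)) (max (k i.castSucc) (k i.succ)))

lemma G_succ {n : ℕ} (k : Fin (n+1) → ℤ) : G (n+1) k = ∑ l ∈ gbox k, wProd k l * G n l := rfl

lemma G_one (k : Fin 1 → ℤ) : G 1 k = 1 := by
  rw [G_succ]; simp [gbox, wProd, G]

lemma gtw_eq_zero_of_not_mem {a b x : ℤ} (h : x < min a b ∨ max a b < x) : gtw a b x = 0 := by
  unfold gtw; split_ifs <;> omega

lemma gtw_desc {a b : ℤ} (h : a = b + 1) (x : ℤ) : gtw a b x = 0 := by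
  unfold gtw; split_ifs <;> omega

-- G vanishes on descents
lemma G_descent {n : ℕ} (l : Fin n → ℤ) (a b : Fin n) (hab : (a : ℕ) + 1 = (b : ℕ))
    (h : l a = l b + 1) : G n l = 0 := by
  match n with
  | 0 => exact absurd a.2 (by omega)
  | 1 => omega
  | n + 2 =>
    rw [G_succ]
    apply Finset.sum_eq_zero
    intro x _
    have ha : (a : ℕ) < n + 1 := by omega
    have hw : wProd l x = 0 := by
      unfold wProd
      apply Finset.prod_eq_zero (Finset.mem_univ (⟨a, ha⟩ : Fin (n+1)))
      have h1 : (⟨a, ha⟩ : Fin (n+1)).castSucc = a := by ext; simp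
      have h2 : (⟨a, ha⟩ : Fin (n+1)).succ = b := by ext; simp; omega
      rw [h1, h2]
      exact gtw_desc h _
    rw [hw, zero_mul]

noncomputable def Bbox {n : ℕ} (k : Fin (n+1) → ℤ) : Finset (Fin n → ℤ) :=
  Fintype.piFinset (fun i : Fin n =>
    Finset.Icc (min (k i.castSucc) (k i.succ) - 1) (max (k i.castSucc) (k i.succ) + 1))

lemma wProd_supp {n : ℕ} {k : Fin (n+1) → ℤ} {l : Fin n → ℤ} (h : wProd k l ≠ 0) :
    l ∈ gbox k := by
  by_contra hl
  apply h
  rw [gbox, Fintype.mem_piFinset] at hl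
  push_neg at hl
  obtain ⟨i, hi⟩ := hl
  rw [Finset.mem_Icc] at hi
  exact Finset.prod_eq_zero (Finset.mem_univ i) (gtw_eq_zero_of_not_mem (by omega))

lemma sum_eq_sum_of_support {X : Type*} [DecidableEq X] {C B : Finset X} {g : X → ℤ}
    (h : ∀ l, g l ≠ 0 → l ∈ C ∩ B) : ∑ l ∈ C, g l = ∑ l ∈ B, g l := by
  rw [← Finset.sum_subset (Finset.inter_subset_left (s₁ := C) (s₂ := B))
      (fun l _ hl => by_contra fun hg => hl (h l hg)),
    ← Finset.sum_subset (Finset.inter_subset_right (s₁ := C) (s₂ := B))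
      (fun l _ hl => by_contra fun hg => hl ((Finset.mem_inter.1 (h l hg)).2 |> fun _ => h l hg))]

def dP (ε b x : ℤ) : ℤ := if ε = 1 then (if x = b+1 then 1 else 0) else -(if x = b then 1 else 0)
def dM (ε a x : ℤ) : ℤ := if ε = 1 then (if x = a then 1 else 0) else -(if x = a-1 then 1 else 0)

lemma gtw_shift {ε : ℤ} (hε : ε = 1 ∨ ε = -1) {u v : ℤ} (hu : u = 0 ∨ u = 1) (hv : v = 0 ∨ v = 1)
    (a b x : ℤ) : gtw (a + ε*u) (b + ε*v) x = gtw a b x + v * dP ε b x - u * dM ε a x := by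
  rcases hε with rfl | rfl <;> rcases hu with rfl | rfl <;> rcases hv with rfl | rfl <;>
    simp only [dP, dM] <;> norm_num <;> unfold gtw <;> split_ifs <;> omega

lemma gtw_arg_shift {ε : ℤ} (hε : ε = 1 ∨ ε = -1) {t : ℤ} (ht : t = 0 ∨ t = 1) (a b x : ℤ) :
    gtw a b (x - ε*t) = gtw a b x + t * dP ε b x - t * dM ε a x := by
  rcases hε with rfl | rfl <;> rcases ht with rfl | rfl <;>
    simp only [dP, dM] <;> norm_num <;> unfold gtw <;> split_ifs <;> omega

lemma dP_mul_dM {ε : ℤ} (hε : ε = 1 ∨ ε = -1) {c x y : ℤ} (h : x ≠ y + 1) :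
    dP ε c x * dM ε c y = 0 := by
  rcases hε with rfl | rfl <;> simp only [dP, dM] <;> norm_num <;>
    first | omega | (split_ifs <;> omega)

def ind {N : ℕ} (U : Finset (Fin N)) (m : Fin N) : ℤ := if m ∈ U then 1 else 0

lemma ind01 {N : ℕ} (U : Finset (Fin N)) (m : Fin N) : ind U m = 0 ∨ ind U m = 1 := by
  unfold ind; split_ifs <;> simp

def bfac (ε : ℤ) {n : ℕ} (k : Fin (n+1) → ℤ) (l : Fin n → ℤ) (σ : Fin n → Fin 3) (i : Fin n) : ℤ :=
  if σ i = 0 then gtw (k i.castSucc) (k i.succ) (l i)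
  else if σ i = 1 then dP ε (k i.succ) (l i) else -dM ε (k i.castSucc) (l i)

def base (ε : ℤ) {n : ℕ} (k : Fin (n+1) → ℤ) (l : Fin n → ℤ) (σ : Fin n → Fin 3) : ℤ :=
  ∏ i : Fin n, bfac ε k l σ i

def tgt {n : ℕ} (σ : Fin n → Fin 3) (i : Fin n) : Fin (n+1) :=
  if σ i = 1 then i.succ else i.castSucc

def Nset {n : ℕ} (σ : Fin n → Fin 3) : Finset (Fin n) := univ.filter fun i => σ i ≠ 0

def Fset {n : ℕ} (σ : Fin n → Fin 3) : Finset (Fin (n+1)) := (Nset σ).image (tgt σ)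

lemma fin3cases (c : Fin 3) : c = 0 ∨ c = 1 ∨ c = 2 := by revert c; decide

lemma expandL {n : ℕ} {ε : ℤ} (hε : ε = 1 ∨ ε = -1) (k : Fin (n+1) → ℤ)
    (U : Finset (Fin (n+1))) (l : Fin n → ℤ) :
    wProd (fun m => k m + ε * ind U m) l
      = ∑ σ : Fin n → Fin 3, (if Fset σ ⊆ U then (1:ℤ) else 0) * base ε k l σ := by
  have hfac : ∀ i : Fin n,
      gtw (k i.castSucc + ε * ind U i.castSucc) (k i.succ + ε * ind U i.succ) (l i)
        = ∑ c : Fin 3, (if c = 0 then gtw (k i.castSucc) (k i.succ) (l i)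
            else if c = 1 then ind U i.succ * dP ε (k i.succ) (l i)
            else -(ind U i.castSucc * dM ε (k i.castSucc) (l i))) := by
    intro i
    rw [gtw_shift hε (ind01 U i.castSucc) (ind01 U i.succ), Fin.sum_univ_three]
    simp only [show (0:Fin 3) = 0 from rfl, show (1:Fin 3) ≠ 0 from by decide,
      show (2:Fin 3) ≠ 0 from by decide, show (1:Fin 3) = 1 from rfl,
      show (2:Fin 3) ≠ 1 from by decide, if_true, if_false, ite_true, ite_false]
    ring
  unfold wProd
  simp only [hfac]
  rw [Finset.prod_univ_sum]
  rw [Fintype.piFinset_univ]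
  apply Finset.sum_congr rfl
  intro σ _
  have hsplit : ∀ i : Fin n,
      (if σ i = 0 then gtw (k i.castSucc) (k i.succ) (l i)
        else if σ i = 1 then ind U i.succ * dP ε (k i.succ) (l i)
        else -(ind U i.castSucc * dM ε (k i.castSucc) (l i)))
      = (if σ i = 0 then 1 else ind U (tgt σ i)) * bfac ε k l σ i := by
    intro i
    rcases fin3cases (σ i) with h | h | h <;> simp [h, bfac, tgt] <;> ring
  calc ∏ i : Fin n, _ = ∏ i : Fin n, (if σ i = 0 then 1 else ind U (tgt σ i)) * bfac ε k l σ i :=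
        Finset.prod_congr rfl fun i _ => hsplit i
    _ = (∏ i : Fin n, (if σ i = 0 then 1 else ind U (tgt σ i))) * base ε k l σ :=
        Finset.prod_mul_distrib
    _ = (if Fset σ ⊆ U then (1:ℤ) else 0) * base ε k l σ := by
        congr 1
        have : ∀ i : Fin n, (if σ i = 0 then (1:ℤ) else ind U (tgt σ i))
            = if (σ i ≠ 0 → tgt σ i ∈ U) then 1 else 0 := by
          intro i
          by_cases h : σ i = 0
          · simp [h]
          · simp [h, ind]
        simp only [this, Finset.prod_boole]
        congr 1
        simp only [eq_iff_iff]
        rw [Fset, Finset.image_subset_iff]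
        constructor
        · intro h i hi
          simp only [Nset, Finset.mem_filter] at hi
          exact h i (Finset.mem_univ i) hi.2
        · intro h i _ hne
          exact h i (by simp [Nset, hne])

lemma expandR {n : ℕ} {ε : ℤ} (hε : ε = 1 ∨ ε = -1) (k : Fin (n+1) → ℤ)
    (T : Finset (Fin n)) (l : Fin n → ℤ) :
    wProd k (fun i => l i - ε * ind T i)
      = ∑ σ : Fin n → Fin 3, (if Nset σ ⊆ T then (1:ℤ) else 0) * base ε k l σ := by
  have hfac : ∀ i : Fin n,
      gtw (k i.castSucc) (k i.succ) (l i - ε * ind T i)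
        = ∑ c : Fin 3, (if c = 0 then gtw (k i.castSucc) (k i.succ) (l i)
            else if c = 1 then ind T i * dP ε (k i.succ) (l i)
            else -(ind T i * dM ε (k i.castSucc) (l i))) := by
    intro i
    rw [gtw_arg_shift hε (ind01 T i), Fin.sum_univ_three]
    simp only [show (1:Fin 3) ≠ 0 from by decide, show (2:Fin 3) ≠ 0 from by decide,
      show (2:Fin 3) ≠ 1 from by decide, if_true, if_false, ite_true, ite_false]
    ring
  unfold wProd
  simp only [hfac]
  rw [Finset.prod_univ_sum, Fintype.piFinset_univ]
  apply Finset.sum_congr rfl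
  intro σ _
  have hsplit : ∀ i : Fin n,
      (if σ i = 0 then gtw (k i.castSucc) (k i.succ) (l i)
        else if σ i = 1 then ind T i * dP ε (k i.succ) (l i)
        else -(ind T i * dM ε (k i.castSucc) (l i)))
      = (if σ i = 0 then 1 else ind T i) * bfac ε k l σ i := by
    intro i
    rcases fin3cases (σ i) with h | h | h <;> simp [h, bfac] <;> ring
  calc ∏ i : Fin n, _ = ∏ i : Fin n, (if σ i = 0 then 1 else ind T i) * bfac ε k l σ i :=
        Finset.prod_congr rfl fun i _ => hsplit i
    _ = (∏ i : Fin n, (if σ i = 0 then 1 else ind T i)) * base ε k l σ :=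
        Finset.prod_mul_distrib
    _ = (if Nset σ ⊆ T then (1:ℤ) else 0) * base ε k l σ := by
        congr 1
        have : ∀ i : Fin n, (if σ i = 0 then (1:ℤ) else ind T i)
            = if (σ i ≠ 0 → i ∈ T) then 1 else 0 := by
          intro i
          by_cases h : σ i = 0
          · simp [h]
          · simp [h, ind]
        simp only [this, Finset.prod_boole]
        congr 1
        simp only [eq_iff_iff]
        constructor
        · intro h i hi
          simp only [Nset, Finset.mem_filter] at hi
          exact h i (Finset.mem_univ i) hi.2
        · intro h i _ hne
          exact h (by simp [Nset, hne])

lemma coefSum {N : ℕ} (j : ℕ) (Fs : Finset (Fin N)) :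
    ∑ V ∈ Finset.powersetCard j (Finset.univ : Finset (Fin N)), ∑ U ∈ V.powerset,
      (-1:ℤ)^U.card * (if Fs ⊆ U then 1 else 0)
    = if Fs.card = j then (-1:ℤ)^j else 0 := by
  have inner : ∀ V : Finset (Fin N),
      (∑ U ∈ V.powerset, (-1:ℤ)^U.card * (if Fs ⊆ U then 1 else 0))
        = if V = Fs then (-1:ℤ)^Fs.card else 0 := by
    intro V
    by_cases hFV : Fs ⊆ V
    · have h1 : (∑ U ∈ V.powerset, (-1:ℤ)^U.card * (if Fs ⊆ U then 1 else 0))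
          = ∑ U ∈ V.powerset.filter (fun U => Fs ⊆ U), (-1:ℤ)^U.card := by
        rw [Finset.sum_filter]
        exact Finset.sum_congr rfl fun U _ => by split_ifs <;> ring
      have h2 : (∑ U ∈ V.powerset.filter (fun U => Fs ⊆ U), (-1:ℤ)^U.card)
          = ∑ A ∈ (V \ Fs).powerset, (-1:ℤ)^(A.card + Fs.card) := by
        apply Finset.sum_nbij' (i := fun U => U \ Fs) (j := fun A => A ∪ Fs)
        · intro U hU
          simp only [Finset.mem_filter, Finset.mem_powerset] at hU
          exact Finset.mem_powerset.2 (Finset.sdiff_subset_sdiff hU.1 (Finset.Subset.refl _))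
        · intro A hA
          simp only [Finset.mem_powerset] at hA
          simp only [Finset.mem_filter, Finset.mem_powerset]
          exact ⟨Finset.union_subset (hA.trans Finset.sdiff_subset) hFV,
            Finset.subset_union_right⟩
        · intro U hU
          simp only [Finset.mem_filter] at hU
          exact Finset.sdiff_union_of_subset hU.2
        · intro A hA
          simp only [Finset.mem_powerset] at hA
          exact Finset.union_sdiff_cancel_right
            (Finset.disjoint_of_subset_left hA Finset.sdiff_disjoint)
        · intro U hU
          simp only [Finset.mem_filter] at hU
          rw [Finset.card_sdiff_add_card_eq_card hU.2]
      rw [h1, h2]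
      have h3 : ∀ A : Finset (Fin N), (-1:ℤ)^(A.card + Fs.card)
          = (-1:ℤ)^Fs.card * (-1:ℤ)^A.card := fun A => by rw [pow_add]; ring
      rw [Finset.sum_congr rfl fun A _ => h3 A, ← Finset.mul_sum,
        Finset.sum_powerset_neg_one_pow_card]
      by_cases hVF : V = Fs
      · rw [if_pos hVF, if_pos (by rw [hVF, Finset.sdiff_self]), mul_one]
      · rw [if_neg hVF, if_neg (fun h => hVF (Finset.Subset.antisymm
          (fun x hx => by
            by_cases hxF : x ∈ Fs
            · exact hxF
            · exact absurd (Finset.mem_sdiff.2 ⟨hx, hxF⟩) (by rw [h]; simp)) hFV)), mul_zero]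
    · rw [Finset.sum_eq_zero, if_neg (fun h => hFV (le_of_eq h.symm))]
      intro U hU
      rw [if_neg, mul_zero]
      intro hsub
      exact hFV (hsub.trans (Finset.mem_powerset.1 hU))
  rw [Finset.sum_congr rfl (fun V _ => inner V), Finset.sum_ite_eq' (Finset.powersetCard j Finset.univ) Fs]
  by_cases h : Fs.card = j
  · rw [if_pos (Finset.mem_powersetCard_univ.2 h), if_pos h, h]
  · rw [if_neg (fun hc => h (Finset.mem_powersetCard_univ.1 hc)), if_neg h]

lemma tgt_val {n : ℕ} (σ : Fin n → Fin 3) (i : Fin n) :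
    ((tgt σ i : Fin (n+1)) : ℕ) = if σ i = 1 then (i:ℕ)+1 else (i:ℕ) := by
  unfold tgt; split_ifs <;> simp

lemma step5 {n j : ℕ} {ε : ℤ} (hε : ε = 1 ∨ ε = -1) (k : Fin (n+1) → ℤ) (l : Fin n → ℤ)
    (fl : ℤ) (hdesc : ∀ a b : Fin n, (a:ℕ)+1 = (b:ℕ) → l a = l b + 1 → fl = 0) :
    ∑ σ : Fin n → Fin 3, (if (Fset σ).card = j then (-1:ℤ)^j else 0) * (base ε k l σ * fl)
    = ∑ σ : Fin n → Fin 3, (if (Nset σ).card = j then (-1:ℤ)^j else 0) * (base ε k l σ * fl) := by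
  apply Finset.sum_congr rfl
  intro σ _
  by_cases hcol : ∃ p q : Fin n, (p:ℕ)+1 = (q:ℕ) ∧ σ p = 1 ∧ σ q = 2
  · obtain ⟨p, q, hpq, hp, hq⟩ := hcol
    suffices h : base ε k l σ * fl = 0 by rw [h, mul_zero, mul_zero]
    by_cases hlp : l p = l q + 1
    · rw [hdesc p q hpq hlp, mul_zero]
    · have hpq' : p ≠ q := fun h => by rw [h] at hpq; omega
      have hbase : base ε k l σ = 0 := by
        unfold base
        rw [← Finset.mul_prod_erase _ _ (Finset.mem_univ p),
          ← Finset.mul_prod_erase _ _ (Finset.mem_erase.2 ⟨Ne.symm hpq', Finset.mem_univ q⟩),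
          ← mul_assoc]
        have h1 : bfac ε k l σ p = dP ε (k p.succ) (l p) := by
          unfold bfac; rw [if_neg (by rw [hp]; decide), if_pos hp]
        have h2 : bfac ε k l σ q = -dM ε (k q.castSucc) (l q) := by
          unfold bfac; rw [if_neg (by rw [hq]; decide), if_neg (by rw [hq]; decide)]
        have h3 : p.succ = q.castSucc := by
          ext; simp [hpq]
        rw [h1, h2, h3, mul_neg, dP_mul_dM hε hlp, neg_zero, zero_mul]
      rw [hbase, zero_mul]
  · have hcard : (Fset σ).card = (Nset σ).card := by
      apply Finset.card_image_of_injOn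
      intro i₁ h₁ i₂ h₂ heq
      simp only [Nset, Finset.mem_coe, Finset.mem_filter] at h₁ h₂
      have hv := congrArg (Fin.val) heq
      rw [tgt_val, tgt_val] at hv
      rcases fin3cases (σ i₁) with c1 | c1 | c1 <;> rcases fin3cases (σ i₂) with c2 | c2 | c2 <;>
        simp only [c1, c2] at hv h₁ h₂ <;>
        first
          | exact absurd rfl h₁.2
          | exact absurd rfl h₂.2
          | (exact Fin.ext (by simpa using hv))
          | (exfalso; exact hcol ⟨i₁, i₂, by simpa [c2, show ¬((2:Fin 3) = 1) from by decide] using hv, c1, c2⟩)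
          | (exfalso; exact hcol ⟨i₂, i₁, by simpa [c1, show ¬((2:Fin 3) = 1) from by decide] using hv.symm, c2, c1⟩)
    rw [hcard]


lemma pullout {A B : Type*} (sA : Finset A) (sB : A → Finset B) (c : A → B → ℤ) (Y : ℤ) :
    ∑ a ∈ sA, ∑ b ∈ sB a, c a b * Y = (∑ a ∈ sA, ∑ b ∈ sB a, c a b) * Y := by
  rw [Finset.sum_mul]
  exact Finset.sum_congr rfl fun a _ => (Finset.sum_mul _ _ _).symm

lemma swap4 {A B C D : Type*} (sA : Finset A) (sB : A → Finset B) (sC : Finset C)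
    (sD : Finset D) (X : A → B → C → D → ℤ) :
    ∑ a ∈ sA, ∑ b ∈ sB a, ∑ c ∈ sC, ∑ d ∈ sD, X a b c d
    = ∑ c ∈ sC, ∑ d ∈ sD, ∑ a ∈ sA, ∑ b ∈ sB a, X a b c d :=
  calc ∑ a ∈ sA, ∑ b ∈ sB a, ∑ c ∈ sC, ∑ d ∈ sD, X a b c d
      = ∑ a ∈ sA, ∑ c ∈ sC, ∑ b ∈ sB a, ∑ d ∈ sD, X a b c d :=
        Finset.sum_congr rfl fun a _ => Finset.sum_comm
    _ = ∑ c ∈ sC, ∑ a ∈ sA, ∑ b ∈ sB a, ∑ d ∈ sD, X a b c d := Finset.sum_comm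
    _ = ∑ c ∈ sC, ∑ a ∈ sA, ∑ d ∈ sD, ∑ b ∈ sB a, X a b c d :=
        Finset.sum_congr rfl fun c _ => Finset.sum_congr rfl fun a _ => Finset.sum_comm
    _ = ∑ c ∈ sC, ∑ d ∈ sD, ∑ a ∈ sA, ∑ b ∈ sB a, X a b c d :=
        Finset.sum_congr rfl fun c _ => Finset.sum_comm

lemma swap3 {A B C : Type*} (sA : Finset A) (sB : A → Finset B) (sC : Finset C)
    (X : A → B → C → ℤ) :
    ∑ a ∈ sA, ∑ b ∈ sB a, ∑ c ∈ sC, X a b c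
    = ∑ c ∈ sC, ∑ a ∈ sA, ∑ b ∈ sB a, X a b c :=
  calc ∑ a ∈ sA, ∑ b ∈ sB a, ∑ c ∈ sC, X a b c
      = ∑ a ∈ sA, ∑ c ∈ sC, ∑ b ∈ sB a, X a b c :=
        Finset.sum_congr rfl fun a _ => Finset.sum_comm
    _ = ∑ c ∈ sC, ∑ a ∈ sA, ∑ b ∈ sB a, X a b c := Finset.sum_comm

lemma KL : ∀ (n : ℕ) (j : ℕ), 1 ≤ j → ∀ (ε : ℤ), (ε = 1 ∨ ε = -1) → ∀ (k : Fin n → ℤ),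
    (∑ V ∈ Finset.powersetCard j (Finset.univ : Finset (Fin n)), ∑ U ∈ V.powerset,
      (-1:ℤ)^U.card * G n (fun m => k m + ε * ind U m)) = 0 := by
  intro n
  induction n with
  | zero =>
    intro j hj ε hε k
    rw [Finset.powersetCard_eq_empty.2 (by simp; omega), Finset.sum_empty]
  | succ n IH =>
    intro j hj ε hε k
    have hbound : ∀ (U : Finset (Fin (n+1))) (m : Fin (n+1)),
        k m - 1 ≤ k m + ε * ind U m ∧ k m + ε * ind U m ≤ k m + 1 := by
      intro U m
      rcases hε with rfl | rfl <;> rcases ind01 U m with h | h <;> rw [h] <;> omega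
    have hA : ∀ U : Finset (Fin (n+1)), G (n+1) (fun m => k m + ε * ind U m)
        = ∑ l ∈ Bbox k, (∑ σ : Fin n → Fin 3,
            (if Fset σ ⊆ U then (1:ℤ) else 0) * base ε k l σ) * G n l := by
      intro U
      rw [G_succ]
      have hext : (∑ l ∈ gbox (fun m => k m + ε * ind U m),
            wProd (fun m => k m + ε * ind U m) l * G n l)
          = ∑ l ∈ Bbox k, wProd (fun m => k m + ε * ind U m) l * G n l := by
        apply sum_eq_sum_of_support
        intro l hl
        have hw : wProd (fun m => k m + ε * ind U m) l ≠ 0 :=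
          fun h => hl (by rw [h, zero_mul])
        have hmem := wProd_supp hw
        refine Finset.mem_inter.2 ⟨hmem, ?_⟩
        rw [gbox, Fintype.mem_piFinset] at hmem
        rw [Bbox, Fintype.mem_piFinset]
        intro i
        have h1 := hmem i
        rw [Finset.mem_Icc] at h1
        rw [Finset.mem_Icc]
        have b1 := hbound U i.castSucc
        have b2 := hbound U i.succ
        omega
      rw [hext]
      exact Finset.sum_congr rfl fun l _ => by rw [expandL hε]
    have hR : ∀ T : Finset (Fin n),
        (∑ l ∈ Bbox k, (∑ σ : Fin n → Fin 3,
            (if Nset σ ⊆ T then (1:ℤ) else 0) * base ε k l σ) * G n l)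
        = ∑ l ∈ gbox k, wProd k l * G n (fun i => l i + ε * ind T i) := by
      intro T
      have hinj : Function.Injective (fun (l : Fin n → ℤ) => fun i => l i + ε * ind T i) := by
        intro l1 l2 h
        funext i
        have := congrFun h i
        simpa using this
      have hmap : (∑ l ∈ gbox k, wProd k l * G n (fun i => l i + ε * ind T i))
          = ∑ l ∈ (gbox k).map ⟨_, hinj⟩,
              wProd k (fun i => l i - ε * ind T i) * G n l := by
        rw [Finset.sum_map]
        refine Finset.sum_congr rfl fun l _ => ?_
        congr 1
        congr 1
        funext i
        simp only [Function.Embedding.coeFn_mk]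
        ring
      rw [hmap]
      have hsupp : (∑ l ∈ (gbox k).map ⟨_, hinj⟩,
            wProd k (fun i => l i - ε * ind T i) * G n l)
          = ∑ l ∈ Bbox k, wProd k (fun i => l i - ε * ind T i) * G n l := by
        apply sum_eq_sum_of_support
        intro l hl
        have hw : wProd k (fun i => l i - ε * ind T i) ≠ 0 :=
          fun h => hl (by rw [h, zero_mul])
        have hmem := wProd_supp hw
        refine Finset.mem_inter.2 ⟨?_, ?_⟩
        · rw [Finset.mem_map]
          refine ⟨fun i => l i - ε * ind T i, hmem, ?_⟩
          funext i
          simp only [Function.Embedding.coeFn_mk]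
          ring
        · rw [gbox, Fintype.mem_piFinset] at hmem
          rw [Bbox, Fintype.mem_piFinset]
          intro i
          have h1 : min (k i.castSucc) (k i.succ) ≤ l i - ε * ind T i
              ∧ l i - ε * ind T i ≤ max (k i.castSucc) (k i.succ) := by
            simpa using hmem i
          rw [Finset.mem_Icc]
          clear hl hw hmem hmap
          have e2 : ε * ind T i = 0 ∨ ε * ind T i = 1 ∨ ε * ind T i = -1 := by
            rcases hε with rfl | rfl <;> rcases ind01 T i with h | h <;> rw [h] <;> omega
          rcases e2 with h | h | h <;> rw [h] at h1 <;> omega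
      rw [hsupp]
      exact (Finset.sum_congr rfl fun l _ => by rw [expandR hε]).symm
    calc (∑ V ∈ Finset.powersetCard j (Finset.univ : Finset (Fin (n+1))), ∑ U ∈ V.powerset,
          (-1:ℤ)^U.card * G (n+1) (fun m => k m + ε * ind U m))
        = ∑ V ∈ Finset.powersetCard j (Finset.univ : Finset (Fin (n+1))), ∑ U ∈ V.powerset,
            ∑ l ∈ Bbox k, ∑ σ : Fin n → Fin 3,
              ((-1:ℤ)^U.card * (if Fset σ ⊆ U then (1:ℤ) else 0)) * (base ε k l σ * G n l) := by
          refine Finset.sum_congr rfl fun V _ => Finset.sum_congr rfl fun U _ => ?_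
          rw [hA U]
          simp only [Finset.sum_mul, Finset.mul_sum]
          exact Finset.sum_congr rfl fun l _ => Finset.sum_congr rfl fun σ _ => by ring
      _ = ∑ l ∈ Bbox k, ∑ σ : Fin n → Fin 3,
            ∑ V ∈ Finset.powersetCard j (Finset.univ : Finset (Fin (n+1))), ∑ U ∈ V.powerset,
              ((-1:ℤ)^U.card * (if Fset σ ⊆ U then (1:ℤ) else 0)) * (base ε k l σ * G n l) :=
          swap4 _ _ _ _ _
      _ = ∑ l ∈ Bbox k, ∑ σ : Fin n → Fin 3,
            (if (Fset σ).card = j then (-1:ℤ)^j else 0) * (base ε k l σ * G n l) := by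
          refine Finset.sum_congr rfl fun l _ => Finset.sum_congr rfl fun σ _ => ?_
          rw [pullout, coefSum]
      _ = ∑ l ∈ Bbox k, ∑ σ : Fin n → Fin 3,
            (if (Nset σ).card = j then (-1:ℤ)^j else 0) * (base ε k l σ * G n l) := by
          refine Finset.sum_congr rfl fun l _ => ?_
          exact step5 hε k l (G n l) (fun a b hab h => G_descent l a b hab h)
      _ = ∑ l ∈ Bbox k, ∑ σ : Fin n → Fin 3,
            ∑ W ∈ Finset.powersetCard j (Finset.univ : Finset (Fin n)), ∑ T ∈ W.powerset,
              ((-1:ℤ)^T.card * (if Nset σ ⊆ T then (1:ℤ) else 0)) * (base ε k l σ * G n l) := by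
          refine Finset.sum_congr rfl fun l _ => Finset.sum_congr rfl fun σ _ => ?_
          rw [pullout, coefSum]
      _ = ∑ W ∈ Finset.powersetCard j (Finset.univ : Finset (Fin n)), ∑ T ∈ W.powerset,
            ∑ l ∈ Bbox k, ∑ σ : Fin n → Fin 3,
              ((-1:ℤ)^T.card * (if Nset σ ⊆ T then (1:ℤ) else 0)) * (base ε k l σ * G n l) :=
          (swap4 _ _ _ _ _).symm
      _ = ∑ W ∈ Finset.powersetCard j (Finset.univ : Finset (Fin n)), ∑ T ∈ W.powerset,
            ∑ l ∈ gbox k, (-1:ℤ)^T.card * (wProd k l * G n (fun i => l i + ε * ind T i)) := by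
          refine Finset.sum_congr rfl fun W _ => Finset.sum_congr rfl fun T _ => ?_
          rw [← Finset.mul_sum, ← hR T]
          simp only [Finset.sum_mul, Finset.mul_sum]
          exact Finset.sum_congr rfl fun l _ => Finset.sum_congr rfl fun σ _ => by ring
      _ = ∑ l ∈ gbox k, ∑ W ∈ Finset.powersetCard j (Finset.univ : Finset (Fin n)),
            ∑ T ∈ W.powerset, (-1:ℤ)^T.card * (wProd k l * G n (fun i => l i + ε * ind T i)) :=
          swap3 _ _ _ _
      _ = 0 := by
          apply Finset.sum_eq_zero
          intro l _
          have : (∑ W ∈ Finset.powersetCard j (Finset.univ : Finset (Fin n)),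
              ∑ T ∈ W.powerset, (-1:ℤ)^T.card * (wProd k l * G n (fun i => l i + ε * ind T i)))
              = wProd k l * ∑ W ∈ Finset.powersetCard j (Finset.univ : Finset (Fin n)),
                  ∑ T ∈ W.powerset, (-1:ℤ)^T.card * G n (fun i => l i + ε * ind T i) := by
            rw [Finset.mul_sum]
            refine Finset.sum_congr rfl fun W _ => ?_
            rw [Finset.mul_sum]
            exact Finset.sum_congr rfl fun T _ => by ring
          rw [this, IH j hj ε hε l, mul_zero]

lemma Arec (n : ℕ) (hn : 1 ≤ n) {ε : ℤ} (hε : ε = 1 ∨ ε = -1) (j : ℕ) (k : Fin n → ℤ) :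
    (∑ V ∈ Finset.powersetCard (j+1)
        ((Finset.univ : Finset (Fin n)).filter (fun m => m ≠ ⟨0, hn⟩)),
      ∑ U ∈ V.powerset, (-1:ℤ)^U.card * G n (fun m => k m + ε * ind U m))
    = (∑ V ∈ Finset.powersetCard j
          ((Finset.univ : Finset (Fin n)).filter (fun m => m ≠ ⟨0, hn⟩)),
        ∑ U ∈ V.powerset, (-1:ℤ)^U.card *
          G n (fun m => (Function.update k ⟨0, hn⟩ (k ⟨0, hn⟩ + ε)) m + ε * ind U m))
      - (∑ V ∈ Finset.powersetCard j
          ((Finset.univ : Finset (Fin n)).filter (fun m => m ≠ ⟨0, hn⟩)),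
        ∑ U ∈ V.powerset, (-1:ℤ)^U.card * G n (fun m => k m + ε * ind U m)) := by
  have h0 := KL n (j+1) (by omega) ε hε k
  set z : Fin n := ⟨0, hn⟩ with hz
  set s := (Finset.univ : Finset (Fin n)).filter (fun m => m ≠ z) with hs
  have hzs : z ∉ s := by simp [hs]
  have huniv : (Finset.univ : Finset (Fin n)) = insert z s := by
    ext m
    simp only [Finset.mem_univ, Finset.mem_insert, hs, Finset.mem_filter, true_and, true_iff]
    by_cases h : m = z
    · exact Or.inl h
    · exact Or.inr h
  rw [huniv, Finset.powersetCard_succ_insert hzs] at h0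
  have hdisj : Disjoint (Finset.powersetCard (j+1) s)
      ((Finset.powersetCard j s).image (insert z)) := by
    rw [Finset.disjoint_left]
    intro V hV1 hV2
    rw [Finset.mem_powersetCard] at hV1
    rw [Finset.mem_image] at hV2
    obtain ⟨V', _, rfl⟩ := hV2
    exact hzs (hV1.1 (Finset.mem_insert_self z V'))
  rw [Finset.sum_union hdisj] at h0
  have hinj : ∀ V1 ∈ Finset.powersetCard j s, ∀ V2 ∈ Finset.powersetCard j s,
      insert z V1 = insert z V2 → V1 = V2 := by
    intro V1 h1 V2 h2 h
    have hz1 : z ∉ V1 := fun hc => hzs ((Finset.mem_powersetCard.1 h1).1 hc)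
    have hz2 : z ∉ V2 := fun hc => hzs ((Finset.mem_powersetCard.1 h2).1 hc)
    rw [← Finset.erase_insert hz1, ← Finset.erase_insert hz2, h]
  rw [Finset.sum_image hinj] at h0
  have himg : ∀ V' ∈ Finset.powersetCard j s,
      (∑ U ∈ (insert z V').powerset, (-1:ℤ)^U.card * G n (fun m => k m + ε * ind U m))
      = (∑ U ∈ V'.powerset, (-1:ℤ)^U.card * G n (fun m => k m + ε * ind U m))
        - ∑ U ∈ V'.powerset, (-1:ℤ)^U.card *
            G n (fun m => (Function.update k z (k z + ε)) m + ε * ind U m) := by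
    intro V' hV'
    have hzV' : z ∉ V' := fun hc => hzs ((Finset.mem_powersetCard.1 hV').1 hc)
    rw [Finset.sum_powerset_insert hzV']
    rw [sub_eq_add_neg]
    congr 1
    rw [← Finset.sum_neg_distrib]
    apply Finset.sum_congr rfl
    intro U hU
    have hzU : z ∉ U := fun hc => hzV' (Finset.mem_powerset.1 hU hc)
    have hcard : (insert z U).card = U.card + 1 := Finset.card_insert_of_notMem hzU
    have harg : (fun m => k m + ε * ind (insert z U) m)
        = (fun m => (Function.update k z (k z + ε)) m + ε * ind U m) := by
      funext m
      by_cases h : m = z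
      · subst h
        rw [Function.update_self]
        simp only [ind, Finset.mem_insert_self, if_true, if_neg hzU]
        ring
      · rw [Function.update_of_ne h]
        simp only [ind, Finset.mem_insert]
        congr 2
        simp [h]
    rw [hcard, harg, pow_succ]
    ring
  rw [Finset.sum_congr rfl himg] at h0
  rw [Finset.sum_sub_distrib] at h0
  linarith [h0]

lemma Aformula (n : ℕ) (hn : 1 ≤ n) {ε : ℤ} (hε : ε = 1 ∨ ε = -1) (j : ℕ) :
    ∀ k : Fin n → ℤ,
    (∑ V ∈ Finset.powersetCard j
        ((Finset.univ : Finset (Fin n)).filter (fun m => m ≠ ⟨0, hn⟩)),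
      ∑ U ∈ V.powerset, (-1:ℤ)^U.card * G n (fun m => k m + ε * ind U m))
    = ∑ i ∈ Finset.range (j + 1), (-1:ℤ)^(j-i) * (j.choose i : ℤ) *
        G n (Function.update k ⟨0, hn⟩ (k ⟨0, hn⟩ + ε * (i:ℤ))) := by
  induction j with
  | zero =>
    intro k
    rw [Finset.powersetCard_zero, Finset.sum_singleton, Finset.powerset_empty,
      Finset.sum_singleton]
    have h1 : (fun m => k m + ε * ind (∅ : Finset (Fin n)) m) = k := by
      funext m; simp [ind]
    have h2 : Function.update k ⟨0, hn⟩ (k ⟨0, hn⟩ + ε * ((0:ℕ):ℤ)) = k := by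
      rw [show ((0:ℕ):ℤ) = 0 from rfl, mul_zero, add_zero, Function.update_eq_self]
    rw [h1, Finset.sum_range_one, h2]
    simp
  | succ j IHj =>
    intro k
    rw [Arec n hn hε j k, IHj, IHj]
    set z : Fin n := ⟨0, hn⟩ with hz
    set k' := Function.update k z (k z + ε) with hk'
    -- rewrite update of update
    have hupd : ∀ i : ℕ, Function.update k' z (k' z + ε * (i:ℤ))
        = Function.update k z (k z + ε * ((i:ℤ)+1)) := by
      intro i
      rw [hk', Function.update_idem, Function.update_self]
      congr 1
      ring
    simp only [hupd]
    -- now pure binomial manipulation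
    set g : ℤ → ℤ := fun t => G n (Function.update k z (k z + ε * t)) with hg
    have hgf : ∀ i : ℕ, G n (Function.update k z (k z + ε * (i:ℤ))) = g (i:ℤ) := fun i => rfl
    have hgf' : ∀ i : ℕ, G n (Function.update k z (k z + ε * ((i:ℤ)+1))) = g ((i:ℤ)+1) :=
      fun i => rfl
    simp only [hgf, hgf']
    have key : ∑ i ∈ Finset.range (j+1+1), (-1:ℤ)^(j+1-i) * ((j+1).choose i : ℤ) * g ↑i
        = (∑ i ∈ Finset.range (j+1), (-1:ℤ)^(j-i) * (j.choose i : ℤ) * g (↑i+1))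
          - ∑ i ∈ Finset.range (j+1), (-1:ℤ)^(j-i) * (j.choose i : ℤ) * g ↑i := by
      rw [Finset.sum_range_succ' (fun i => (-1:ℤ)^(j+1-i) * ((j+1).choose i : ℤ) * g ↑i) (j+1)]
      have hA : ∀ i ∈ Finset.range (j+1),
          (-1:ℤ)^(j+1-(i+1)) * (((j+1).choose (i+1) : ℕ):ℤ) * g ↑(i+1)
          = (-1:ℤ)^(j-i) * (j.choose i : ℤ) * g (↑i+1)
            + (-1:ℤ)^(j-i) * (j.choose (i+1) : ℤ) * g (↑i+1) := by
        intro i hi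
        have h1 : j+1-(i+1) = j-i := by omega
        have h2 : ((i+1:ℕ):ℤ) = (i:ℤ)+1 := by push_cast; ring
        rw [h1, h2, Nat.choose_succ_succ j i]
        push_cast
        ring
      rw [Finset.sum_congr rfl hA, Finset.sum_add_distrib]
      have hB : (∑ i ∈ Finset.range (j+1), (-1:ℤ)^(j-i) * (j.choose (i+1) : ℤ) * g (↑i+1))
          = ∑ i ∈ Finset.range j, (-1:ℤ)^(j-i) * (j.choose (i+1) : ℤ) * g (↑i+1) := by
        rw [Finset.sum_range_succ]
        simp [Nat.choose_succ_self]
      have hC : (∑ i ∈ Finset.range (j+1), (-1:ℤ)^(j-i) * (j.choose i : ℤ) * g ↑i)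
          = ∑ i ∈ Finset.range j, (-1:ℤ)^(j-(i+1)) * (j.choose (i+1) : ℤ) * g ↑(i+1)
            + (-1:ℤ)^(j-0) * (j.choose 0 : ℤ) * g ↑(0:ℕ) :=
        Finset.sum_range_succ' _ j
      have hD : ∀ i ∈ Finset.range j, (-1:ℤ)^(j-i) * (j.choose (i+1) : ℤ) * g (↑i+1)
          = -((-1:ℤ)^(j-(i+1)) * (j.choose (i+1) : ℤ) * g ↑(i+1)) := by
        intro i hi
        rw [Finset.mem_range] at hi
        have h1 : j - i = (j - (i+1)) + 1 := by omega
        have h2 : ((i+1:ℕ):ℤ) = (i:ℤ)+1 := by push_cast; ring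
        rw [h1, pow_succ, h2]
        ring
      rw [hB, Finset.sum_congr rfl hD, Finset.sum_neg_distrib, hC]
      have h0 : (-1:ℤ)^(j+1-0) = -(-1:ℤ)^(j-0) := by
        simp only [Nat.sub_zero, pow_succ]
        ring
      rw [h0]
      simp only [Nat.choose_zero_right, Nat.cast_one, Nat.cast_ofNat, Nat.cast_zero]
      ring
    exact key.symm



/-- Problem 16 of the paper: for `j ≥ 0`, summing over subsets `V` of `{2,…,n}`
(i.e. avoiding the first position, which is `⟨0, hn⟩ : Fin n`),
`∑_{V, |V|=j} ∑_{U ⊆ V} (−1)^{|U|} G(k₁, k₂ ± ε₂(U), …, kₙ ± εₙ(U)) =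
 ∑_{i=0}^{j} (−1)^{j−i} C(j,i) G(k₁ ± i, k₂, …, kₙ)`. -/
theorem elementary_prime_sijection (n : ℕ) (hn : 1 ≤ n) (k : Fin n → ℤ) (j : ℕ) :
    ((∑ V ∈ Finset.powersetCard j
          ((Finset.univ : Finset (Fin n)).filter (fun m => m ≠ ⟨0, hn⟩)),
        ∑ U ∈ V.powerset,
          (-1 : ℤ) ^ U.card * G n (fun m => k m + if m ∈ U then 1 else 0)) =
      ∑ i ∈ Finset.range (j + 1),
        (-1 : ℤ) ^ (j - i) * (j.choose i : ℤ) *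
          G n (Function.update k ⟨0, hn⟩ (k ⟨0, hn⟩ + i))) ∧
    ((∑ V ∈ Finset.powersetCard j
          ((Finset.univ : Finset (Fin n)).filter (fun m => m ≠ ⟨0, hn⟩)),
        ∑ U ∈ V.powerset,
          (-1 : ℤ) ^ U.card * G n (fun m => k m - if m ∈ U then 1 else 0)) =
      ∑ i ∈ Finset.range (j + 1),
        (-1 : ℤ) ^ (j - i) * (j.choose i : ℤ) *
          G n (Function.update k ⟨0, hn⟩ (k ⟨0, hn⟩ - i))) := by
  constructor
  · have h := Aformula n hn (ε := 1) (Or.inl rfl) j k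
    simp only [one_mul, ind] at h
    exact h
  · have h := Aformula n hn (ε := -1) (Or.inr rfl) j k
    simp only [ind, neg_one_mul, ← sub_eq_add_neg] at h
    exact h
end
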